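/- Let A be an n×n Hermitian matrix and P a unitary matrix commuting with A, sharing an orthonormal eigenbasis z₁,…,zₙ with ⟨a|zₖ⟩ ≠ 0 for all k (where a is a fixed index). If exp(−itA)|a⟩ = γ P|a⟩ for some real t and unimodular γ, then exp(−itA) = γ' P for some unimodular γ'. -/

import Mathlib

open Matrix BigOperators

/-!
Let `U` be the unitary whose columns are the `z k`. Both `A` and `P` are `U`-conjugates of
diagonal matrices, hence so is `exp (-itA)`. Applying `Uᴴ` to the hypothesis and reading off the
`k`-th coordinate gives `ε k * conj (z k a) = γ * μ k * conj (z k a)` for the eigenvalues `ε k` of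
`exp (-itA)`; since `z k a ≠ 0`, the two diagonals agree up to the factor `γ`, so `γ' = γ` works.
-/

namespace Matrix

variable {ι R 𝕜 : Type*} [Fintype ι] [DecidableEq ι]

section CommRing

variable [CommRing R] [StarRing R]

theorem transpose_of_mem_unitaryGroup_of_orthonormal {z : ι → ι → R}
    (hz : ∀ k l, ∑ i, star (z k i) * z l i = if k = l then 1 else 0) :
    (of z)ᵀ ∈ unitaryGroup ι R :=
  mem_unitaryGroup_iff'.2 <| by
    ext k l
    simpa [mul_apply, one_apply] using hz k l

theorem eq_conj_diagonal_of_mulVec_eq_smul {U M : Matrix ι ι R} (hU : U ∈ unitaryGroup ι R)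
    {d : ι → R} (hM : ∀ k, M *ᵥ Uᵀ k = d k • Uᵀ k) :
    M = U * diagonal d * star U := by
  have hMU : M * U = U * diagonal d := by
    ext i k
    rw [mul_diagonal]
    simpa [mul_apply, mulVec, dotProduct, mul_comm] using congrFun (hM k) i
  rw [← hMU, mul_assoc, Unitary.mul_star_self_of_mem hU, mul_one]

end CommRing

theorem conj_diagonal_eq_smul_of_mulVec_single_eq [Field 𝕜] [StarRing 𝕜] {U : Matrix ι ι 𝕜}
    (hU : U ∈ unitaryGroup ι 𝕜) {a : ι} (ha : ∀ k, U a k ≠ 0) {α β : ι → 𝕜} {γ : 𝕜}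
    (h : (U * diagonal α * star U) *ᵥ Pi.single a 1
      = γ • (U * diagonal β * star U) *ᵥ Pi.single a 1) :
    U * diagonal α * star U = γ • (U * diagonal β * star U) := by
  have hcoord : ∀ k, α k * star (U a k) = γ * (β k * star (U a k)) := by
    have hcancel : ∀ D, star U * (U * diagonal D * star U) = diagonal D * star U := fun D => by
      rw [← mul_assoc, ← mul_assoc, Unitary.star_mul_self_of_mem hU, one_mul]
    have h' := congrArg (star U *ᵥ ·) h
    simp only [mulVec_smul, mulVec_mulVec, hcancel] at h'
    intro k
    simpa [mul_apply, diagonal] using congrFun h' k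
  have hαβ : α = γ • β := funext fun k =>
    mul_right_cancel₀ (star_ne_zero.2 (ha k)) <| by
      rw [hcoord k, Pi.smul_apply, smul_eq_mul, mul_assoc]
  rw [hαβ, diagonal_smul, Matrix.mul_smul, Matrix.smul_mul]

open NormedSpace in
theorem exp_conj_diagonal_of_mem_unitaryGroup [RCLike 𝕜] {U : Matrix ι ι 𝕜} (hU : U ∈ unitaryGroup ι 𝕜) (d : ι → 𝕜) :
    exp (U * diagonal d * star U) = U * diagonal (fun k => exp (d k)) * star U := by
  simpa [exp_diagonal, Pi.exp_def] using exp_units_conj (Unitary.toUnits ⟨U, hU⟩) (diagonal d)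

end Matrix

theorem pst_implies_scaled_permutation_general (n : ℕ) (A P : Matrix (Fin n) (Fin n) ℂ)
    (z : Fin n → (Fin n → ℂ)) (lam : Fin n → ℝ) (μ : Fin n → ℂ)
    (horth : ∀ k l, ∑ i, (starRingEnd ℂ) (z k i) * z l i = if k = l then 1 else 0)
    (heigA : ∀ k, A.mulVec (z k) = ((lam k : ℂ)) • z k)
    (heigP : ∀ k, P.mulVec (z k) = μ k • z k)
    (a : Fin n) (hsupp : ∀ k, z k a ≠ 0)
    (t : ℝ) (γ : ℂ) (hγ : ‖γ‖ = 1)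
    (hpst : (NormedSpace.exp ((-(Complex.I * (t : ℂ))) • A)).mulVec (Pi.single a 1)
      = γ • P.mulVec (Pi.single a 1)) :
    ∃ γ' : ℂ, ‖γ'‖ = 1 ∧
      NormedSpace.exp ((-(Complex.I * (t : ℂ))) • A) = γ' • P := by
  have hU := transpose_of_mem_unitaryGroup_of_orthonormal horth
  have hA := eq_conj_diagonal_of_mulVec_eq_smul hU heigA
  have hP := eq_conj_diagonal_of_mulVec_eq_smul hU heigP
  have hcA : (-(Complex.I * t)) • A
      = (of z)ᵀ * diagonal ((-(Complex.I * t)) • fun k => (lam k : ℂ)) * star (of z)ᵀ := by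
    rw [hA, diagonal_smul, Matrix.mul_smul, Matrix.smul_mul]
  rw [hcA, exp_conj_diagonal_of_mem_unitaryGroup hU, hP] at hpst ⊢
  exact ⟨γ, hγ, conj_diagonal_eq_smul_of_mulVec_single_eq hU hsupp hpst⟩

theorem pst_implies_scaled_permutation (n : ℕ) (A P : Matrix (Fin n) (Fin n) ℂ)
    (hA : A.IsHermitian) (hP : P * Pᴴ = 1) (hcomm : A * P = P * A)
    (z : Fin n → (Fin n → ℂ)) (lam : Fin n → ℝ) (μ : Fin n → ℂ)
    (horth : ∀ k l, ∑ i, (starRingEnd ℂ) (z k i) * z l i = if k = l then 1 else 0)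
    (heigA : ∀ k, A.mulVec (z k) = ((lam k : ℂ)) • z k)
    (heigP : ∀ k, P.mulVec (z k) = μ k • z k)
    (hμ : ∀ k, ‖μ k‖ = 1)
    (a : Fin n) (hsupp : ∀ k, z k a ≠ 0)
    (t : ℝ) (γ : ℂ) (hγ : ‖γ‖ = 1)
    (hpst : (NormedSpace.exp ((-(Complex.I * (t : ℂ))) • A)).mulVec (Pi.single a 1)
      = γ • P.mulVec (Pi.single a 1)) :
    ∃ γ' : ℂ, ‖γ'‖ = 1 ∧
      NormedSpace.exp ((-(Complex.I * (t : ℂ))) • A) = γ' • P :=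
  pst_implies_scaled_permutation_general n A P z lam μ horth heigA heigP a hsupp t γ hγ hpst
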